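/- Let θ = (𝕋, 𝕆, μ₁) and θ̂ = (𝕋̂, 𝕆̂, μ̂₁) be two POMDP parameter triples with S ≤ O such that σ_min(𝕆̂_h) ≥ α > 0 for every h (smallest singular value). Let π be a deterministic policy. Then for all h ≥ 1: Σ_{τ_h ∈ Γ(π,h)} ‖b(τ_h; θ) − b(τ_h; θ̂)‖₁ ≤ (√S/α) Σ_{j=1}^{h} Σ_{τ_j ∈ Γ(π,j)} ‖(B_j(a_j, o_j; θ̂) − B_j(a_j, o_j; θ)) b(τ_{j−1}; θ)‖₁ + (√S/α) ‖b₀(θ) − b₀(θ̂)‖₁, where for τ_j = (a_j, o_j, τ_{j−1}) the trajectory τ_{j−1} denotes its length-(j−1) prefix. -/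

import Mathlib

open Matrix BigOperators
open scoped Classical

noncomputable section

/-- The entrywise ℓ¹-norm of a finite vector. -/
def l1norm {n : ℕ} (v : Fin n → ℝ) : ℝ := ∑ i, |v i|

/-- The Euclidean (ℓ²) norm of a finite vector. -/
def l2norm {n : ℕ} (v : Fin n → ℝ) : ℝ := Real.sqrt (∑ i, (v i) ^ 2)

/-- The smallest singular value of a matrix, i.e. the infimum of `‖M x‖₂`
over unit vectors `x`. -/
def sigmaMin {m n : ℕ} (M : Matrix (Fin m) (Fin n) ℝ) : ℝ :=
  sInf {r : ℝ | ∃ x : Fin n → ℝ, l2norm x = 1 ∧ r = l2norm (M.mulVec x)}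

/-- The Moore–Penrose pseudoinverse of a full-column-rank matrix:
`M† = (Mᵀ M)⁻¹ Mᵀ`. -/
def pinvFC {m n : ℕ} (M : Matrix (Fin m) (Fin n) ℝ) : Matrix (Fin n) (Fin m) ℝ :=
  (Mᵀ * M)⁻¹ * Mᵀ

/-- A POMDP parameter triple `θ = (𝕋, 𝕆, μ₁)`: column-stochastic transition
matrices `𝕋_h(a) ∈ ℝ^{S×S}` (entry `(s', s)` is `𝕋_h(s'|s,a)`), observation
matrices `𝕆_h ∈ ℝ^{O×S}` with probability-vector columns, and an initial
distribution `μ₁ ∈ ℝ^S`.  Steps are indexed by `ℕ` (1-based). -/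
structure POMDPParams (S A O : ℕ) where
  T : ℕ → Fin A → Matrix (Fin S) (Fin S) ℝ
  Ob : ℕ → Matrix (Fin O) (Fin S) ℝ
  mu1 : Fin S → ℝ
  T_nonneg : ∀ h a s' s, 0 ≤ T h a s' s
  T_colsum : ∀ h a s, ∑ s', T h a s' s = 1
  Ob_nonneg : ∀ h o s, 0 ≤ Ob h o s
  Ob_colsum : ∀ h s, ∑ o, Ob h o s = 1
  mu1_nonneg : ∀ s, 0 ≤ mu1 s
  mu1_sum : ∑ s, mu1 s = 1

namespace POMDPParams

variable {S A O : ℕ}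

/-- The observable operator `B_h(a, o; θ) = 𝕆_{h+1} 𝕋_h(a) diag(𝕆_h(o|·)) 𝕆_h†`. -/
def Bop (θ : POMDPParams S A O) (h : ℕ) (a : Fin A) (o : Fin O) :
    Matrix (Fin O) (Fin O) ℝ :=
  θ.Ob (h + 1) * θ.T h a * Matrix.diagonal (fun s => θ.Ob h o s) * pinvFC (θ.Ob h)

/-- The initial observable-operator vector `b₀(θ) = 𝕆₁ μ₁`. -/
def bvec0 (θ : POMDPParams S A O) : Fin O → ℝ := (θ.Ob 1).mulVec θ.mu1

/-- A length-`h` trajectory `τ_h = (a_h, o_h, …, a₁, o₁)` is encoded as a map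
`Fin h → Fin A × Fin O`, index `i` holding the pair `(a_{i+1}, o_{i+1})`. -/
abbrev Traj (A O h : ℕ) := Fin h → Fin A × Fin O

/-- The unnormalized belief
`b(τ_h; θ) = B_h(a_h, o_h; θ) ⋯ B₁(a₁, o₁; θ) b₀(θ)`. -/
def belief (θ : POMDPParams S A O) : (h : ℕ) → Traj A O h → Fin O → ℝ
  | 0, _ => θ.bvec0
  | h + 1, τ =>
      (θ.Bop (h + 1) (τ (Fin.last h)).1 (τ (Fin.last h)).2).mulVec
        (θ.belief h (fun i : Fin h => τ i.castSucc))

/-- `stateBelief θ h τ s = Pr_θ(o_h, …, o₁, s_{h+1} = s | a_h, …, a₁)`, the joint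
probability of the observations of `τ` together with reaching state `s` at step
`h+1`, given the actions of `τ`. -/
def stateBelief (θ : POMDPParams S A O) : (h : ℕ) → Traj A O h → Fin S → ℝ
  | 0, _ => θ.mu1
  | h + 1, τ =>
      (θ.T (h + 1) (τ (Fin.last h)).1).mulVec
        (fun s => θ.Ob (h + 1) (τ (Fin.last h)).2 s *
          θ.stateBelief h (fun i : Fin h => τ i.castSucc) s)

/-- The conditional trajectory probability
`p(τ_h; θ) = Pr_θ(o_h, …, o₁ | a_{h−1}, …, a₁)`
(the last action of `τ_h` is irrelevant). -/
def trajProb (θ : POMDPParams S A O) : (h : ℕ) → Traj A O h → ℝ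
  | 0, _ => 1
  | h + 1, τ =>
      ∑ s, θ.Ob (h + 1) (τ (Fin.last h)).2 s *
        θ.stateBelief h (fun i : Fin h => τ i.castSucc) s

end POMDPParams

/-- A deterministic policy: given the length-`n` past history (most recent pair
first corresponds to index `n-1`) and the current observation, produce the
action for step `n+1`. -/
def Policy (A O : ℕ) := ∀ n : ℕ, (Fin n → Fin A × Fin O) → Fin O → Fin A

/-- A trajectory is admissible for `π` (i.e. lies in `Γ(π, h)`) if each of its
actions is the one `π` assigns to the preceding history. -/
def IsAdm {A O : ℕ} (π : Policy A O) {h : ℕ} (τ : POMDPParams.Traj A O h) : Prop :=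
  ∀ j : Fin h, (τ j).1 = π j.val (fun i : Fin j.val => τ (Fin.castLE j.isLt.le i)) (τ j).2

/-- `Γ(π, h)`: the finite set of length-`h` trajectories admissible for `π`. -/
noncomputable def GammaF {A O : ℕ} (π : Policy A O) (h : ℕ) :
    Finset (POMDPParams.Traj A O h) :=
  Finset.univ.filter (fun τ => IsAdm π τ)

/-- The state visitation probability `Pr^π_θ(s_h = s)` (for `h ≥ 1`). -/
noncomputable def visitProb {S A O : ℕ} (θ : POMDPParams S A O) (π : Policy A O)
    (h : ℕ) (s : Fin S) : ℝ :=
  ∑ τ ∈ GammaF π (h - 1), θ.stateBelief (h - 1) τ s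

/-- The trajectory induced by a deterministic policy `π` on an observation
sequence: actions are filled in by `π`. -/
def trajOf {A O : ℕ} (π : Policy A O) : (h : ℕ) → (Fin h → Fin O) → POMDPParams.Traj A O h
  | 0, _ => Fin.elim0
  | h + 1, ω =>
      Fin.snoc (trajOf π h (fun i : Fin h => ω i.castSucc))
        (π h (trajOf π h (fun i : Fin h => ω i.castSucc)) (ω (Fin.last h)), ω (Fin.last h))

end
noncomputable section
open POMDPParams

/-! ### Auxiliary norm lemmas -/

lemma l1norm_nonneg {n : ℕ} (v : Fin n → ℝ) : 0 ≤ l1norm v :=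
  Finset.sum_nonneg fun _ _ => abs_nonneg _

lemma l2norm_nonneg {n : ℕ} (v : Fin n → ℝ) : 0 ≤ l2norm v := Real.sqrt_nonneg _

lemma l2norm_pos {n : ℕ} {v : Fin n → ℝ} (hv : v ≠ 0) : 0 < l2norm v := by
  rcases (l2norm_nonneg v).lt_or_eq with h | h
  · exact h
  · exfalso
    apply hv
    have hsum : ∑ i, (v i) ^ 2 = 0 := by
      have hle : ∑ i, (v i) ^ 2 ≤ 0 := Real.sqrt_eq_zero'.mp h.symm
      exact le_antisymm hle (Finset.sum_nonneg fun i _ => sq_nonneg _)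
    funext i
    have := (Finset.sum_eq_zero_iff_of_nonneg (fun i _ => sq_nonneg (v i))).mp hsum i
      (Finset.mem_univ i)
    exact pow_eq_zero_iff (n := 2) (by norm_num) |>.mp this

lemma l2norm_smul {n : ℕ} (c : ℝ) (v : Fin n → ℝ) : l2norm (c • v) = |c| * l2norm v := by
  unfold l2norm
  rw [← Real.sqrt_sq_eq_abs, ← Real.sqrt_mul (sq_nonneg c), Finset.mul_sum]
  congr 1
  apply Finset.sum_congr rfl
  intro i _
  simp [mul_pow]

lemma sq_sum_abs_le {n : ℕ} (v : Fin n → ℝ) : ∑ i, (v i) ^ 2 ≤ (l1norm v) ^ 2 := by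
  have h : ∀ i : Fin n, (v i) ^ 2 ≤ |v i| * l1norm v := by
    intro i
    have : |v i| ≤ l1norm v := Finset.single_le_sum (fun j _ => abs_nonneg (v j)) (Finset.mem_univ i)
    calc (v i) ^ 2 = |v i| * |v i| := by rw [abs_mul_abs_self]; ring
    _ ≤ |v i| * l1norm v := mul_le_mul_of_nonneg_left this (abs_nonneg _)
  calc ∑ i, (v i) ^ 2 ≤ ∑ i, |v i| * l1norm v := Finset.sum_le_sum fun i _ => h i
  _ = (l1norm v) ^ 2 := by rw [← Finset.sum_mul]; unfold l1norm; ring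

lemma l2norm_le_l1norm {n : ℕ} (v : Fin n → ℝ) : l2norm v ≤ l1norm v := by
  unfold l2norm
  calc Real.sqrt (∑ i, (v i) ^ 2) ≤ Real.sqrt ((l1norm v) ^ 2) :=
        Real.sqrt_le_sqrt (sq_sum_abs_le v)
  _ = l1norm v := Real.sqrt_sq (l1norm_nonneg v)

lemma l1norm_le_sqrt_mul_l2norm {n : ℕ} (v : Fin n → ℝ) :
    l1norm v ≤ Real.sqrt n * l2norm v := by
  have h := Finset.sum_mul_sq_le_sq_mul_sq Finset.univ (fun _ : Fin n => (1 : ℝ))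
    (fun i => |v i|)
  simp only [one_mul, one_pow, sq_abs] at h
  have h2 : (l1norm v) ^ 2 ≤ (n : ℝ) * ∑ i, (v i) ^ 2 := by
    simpa [l1norm, Finset.card_univ] using h
  calc l1norm v = Real.sqrt ((l1norm v) ^ 2) := (Real.sqrt_sq (l1norm_nonneg v)).symm
  _ ≤ Real.sqrt ((n : ℝ) * ∑ i, (v i) ^ 2) := Real.sqrt_le_sqrt h2
  _ = Real.sqrt n * l2norm v := by rw [Real.sqrt_mul (Nat.cast_nonneg n)]; rfl

lemma dotProduct_le_l2norm_mul {n : ℕ} (v w : Fin n → ℝ) :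
    v ⬝ᵥ w ≤ l2norm v * l2norm w := by
  have h := Finset.sum_mul_sq_le_sq_mul_sq Finset.univ v w
  calc v ⬝ᵥ w ≤ |∑ i, v i * w i| := le_abs_self _
  _ = Real.sqrt ((∑ i, v i * w i) ^ 2) := (Real.sqrt_sq_eq_abs _).symm
  _ ≤ Real.sqrt ((∑ i, (v i) ^ 2) * ∑ i, (w i) ^ 2) := Real.sqrt_le_sqrt h
  _ = l2norm v * l2norm w := Real.sqrt_mul (Finset.sum_nonneg fun i _ => sq_nonneg _) _

lemma dotProduct_self_eq_sq_l2norm {n : ℕ} (v : Fin n → ℝ) :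
    v ⬝ᵥ v = (l2norm v) ^ 2 := by
  rw [l2norm, Real.sq_sqrt (Finset.sum_nonneg fun i _ => sq_nonneg _)]
  simp [dotProduct, sq]

lemma l1norm_sub_le {n : ℕ} (u v : Fin n → ℝ) : l1norm (u - v) ≤ l1norm u + l1norm v := by
  unfold l1norm
  rw [← Finset.sum_add_distrib]
  apply Finset.sum_le_sum
  intro i _
  exact (abs_sub _ _)

/-! ### Singular value / pseudoinverse lemmas -/

lemma sigmaMin_le {m n : ℕ} (M : Matrix (Fin m) (Fin n) ℝ) {x : Fin n → ℝ}
    (hx : l2norm x = 1) : sigmaMin M ≤ l2norm (M.mulVec x) := by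
  apply csInf_le
  · exact ⟨0, fun r ⟨y, _, hy⟩ => hy ▸ l2norm_nonneg _⟩
  · exact ⟨x, hx, rfl⟩

lemma le_l2norm_mulVec {m n : ℕ} {M : Matrix (Fin m) (Fin n) ℝ} {α : ℝ}
    (h : α ≤ sigmaMin M) (x : Fin n → ℝ) :
    α * l2norm x ≤ l2norm (M.mulVec x) := by
  by_cases hx : x = 0
  · subst hx
    simp only [Matrix.mulVec_zero]
    have : l2norm (0 : Fin n → ℝ) = 0 := by simp [l2norm]
    rw [this]; simp [l2norm]
  · have hr : 0 < l2norm x := l2norm_pos hx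
    set r := l2norm x with hrdef
    have hu : l2norm (r⁻¹ • x) = 1 := by
      rw [l2norm_smul, abs_of_pos (inv_pos.mpr hr)]
      field_simp
      exact hrdef.symm
    have h1 : sigmaMin M ≤ l2norm (M.mulVec (r⁻¹ • x)) := sigmaMin_le M hu
    rw [Matrix.mulVec_smul, l2norm_smul, abs_of_pos (inv_pos.mpr hr)] at h1
    have := h.trans h1
    calc α * r ≤ (r⁻¹ * l2norm (M.mulVec x)) * r := by
          apply mul_le_mul_of_nonneg_right this hr.le
    _ = l2norm (M.mulVec x) := by field_simp

lemma dot_transpose_mul_self {m n : ℕ} (M : Matrix (Fin m) (Fin n) ℝ) (x : Fin n → ℝ) :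
    x ⬝ᵥ ((Mᵀ * M) *ᵥ x) = (M *ᵥ x) ⬝ᵥ (M *ᵥ x) := by
  rw [← Matrix.mulVec_mulVec, Matrix.dotProduct_mulVec, Matrix.vecMul_transpose]

lemma posdef_transpose_mul {m n : ℕ} {M : Matrix (Fin m) (Fin n) ℝ} {α : ℝ} (hα : 0 < α)
    (h : ∀ x, α * l2norm x ≤ l2norm (M.mulVec x)) :
    (Mᵀ * M).PosDef := by
  refine Matrix.PosDef.of_dotProduct_mulVec_pos ?_ ?_
  · have : (Mᵀ * M).IsHermitian := by
      have := Matrix.isHermitian_conjTranspose_mul_self M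
      simpa [Matrix.conjTranspose_eq_transpose_of_trivial] using this
    exact this
  · intro x hx
    have hpos : 0 < l2norm (M.mulVec x) :=
      lt_of_lt_of_le (mul_pos hα (l2norm_pos hx)) (h x)
    have hd : (0 : ℝ) < (M *ᵥ x) ⬝ᵥ (M *ᵥ x) := by
      rw [dotProduct_self_eq_sq_l2norm]
      positivity
    simpa [dot_transpose_mul_self, star_trivial] using hd

lemma pinvFC_mul_self {m n : ℕ} {M : Matrix (Fin m) (Fin n) ℝ} {α : ℝ} (hα : 0 < α)
    (h : ∀ x, α * l2norm x ≤ l2norm (M.mulVec x)) :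
    pinvFC M * M = 1 := by
  have hpd := posdef_transpose_mul hα h
  have hdet : IsUnit (Mᵀ * M).det := hpd.det_pos.ne'.isUnit
  rw [pinvFC, Matrix.mul_assoc]
  exact Matrix.nonsing_inv_mul _ hdet

lemma l2norm_mul_pinv_le {m n : ℕ} {M : Matrix (Fin m) (Fin n) ℝ} {α : ℝ} (hα : 0 < α)
    (h : ∀ x, α * l2norm x ≤ l2norm (M.mulVec x)) (w : Fin m → ℝ) :
    l2norm (M *ᵥ ((pinvFC M) *ᵥ w)) ≤ l2norm w := by
  have hpd := posdef_transpose_mul hα h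
  have hdet : IsUnit (Mᵀ * M).det := hpd.det_pos.ne'.isUnit
  set v := (pinvFC M) *ᵥ w with hv
  have hkey : Mᵀ *ᵥ (M *ᵥ v) = Mᵀ *ᵥ w := by
    rw [hv, pinvFC]
    rw [Matrix.mulVec_mulVec, Matrix.mulVec_mulVec]
    congr 1
    rw [← Matrix.mul_assoc, Matrix.mul_nonsing_inv _ hdet, Matrix.one_mul]
  have hdot : (M *ᵥ v) ⬝ᵥ (M *ᵥ v) = (M *ᵥ v) ⬝ᵥ w := by
    have h1 : v ⬝ᵥ (Mᵀ *ᵥ (M *ᵥ v)) = (M *ᵥ v) ⬝ᵥ (M *ᵥ v) := by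
      rw [Matrix.mulVec_transpose, dotProduct_comm, ← Matrix.dotProduct_mulVec]
    have h2 : v ⬝ᵥ (Mᵀ *ᵥ w) = (M *ᵥ v) ⬝ᵥ w := by
      rw [Matrix.mulVec_transpose, dotProduct_comm, ← Matrix.dotProduct_mulVec]
      exact dotProduct_comm _ _
    rw [← h1, hkey, h2]
  by_cases hz : l2norm (M *ᵥ v) = 0
  · rw [hz]; exact l2norm_nonneg w
  · have hpos : 0 < l2norm (M *ᵥ v) := (l2norm_nonneg _).lt_of_ne (Ne.symm hz)
    have : (l2norm (M *ᵥ v)) ^ 2 ≤ l2norm (M *ᵥ v) * l2norm w := by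
      rw [← dotProduct_self_eq_sq_l2norm, hdot]
      exact dotProduct_le_l2norm_mul _ _
    nlinarith

lemma l1norm_pinv_mulVec_le {m n : ℕ} {M : Matrix (Fin m) (Fin n) ℝ} {α : ℝ} (hα : 0 < α)
    (h : ∀ x, α * l2norm x ≤ l2norm (M.mulVec x)) (w : Fin m → ℝ) :
    l1norm ((pinvFC M) *ᵥ w) ≤ (Real.sqrt n / α) * l1norm w := by
  have h1 : α * l2norm ((pinvFC M) *ᵥ w) ≤ l2norm w :=
    (h _).trans (l2norm_mul_pinv_le hα h w)
  have h2 : l2norm ((pinvFC M) *ᵥ w) ≤ l2norm w / α := by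
    rw [le_div_iff₀ hα]; linarith [h1]
  calc l1norm ((pinvFC M) *ᵥ w) ≤ Real.sqrt n * l2norm ((pinvFC M) *ᵥ w) :=
        l1norm_le_sqrt_mul_l2norm _
  _ ≤ Real.sqrt n * (l2norm w / α) := by
      apply mul_le_mul_of_nonneg_left h2 (Real.sqrt_nonneg _)
  _ ≤ Real.sqrt n * (l1norm w / α) := by gcongr; exact l2norm_le_l1norm w
  _ = (Real.sqrt n / α) * l1norm w := by ring

/-! ### Stochastic contraction lemmas -/

lemma l1norm_mulVec_stoch {m n : ℕ} {M : Matrix (Fin m) (Fin n) ℝ}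
    (hnn : ∀ i j, 0 ≤ M i j) (hcol : ∀ j, ∑ i, M i j ≤ 1) (v : Fin n → ℝ) :
    l1norm (M *ᵥ v) ≤ l1norm v := by
  unfold l1norm
  calc ∑ i, |(M *ᵥ v) i| ≤ ∑ i, ∑ j, M i j * |v j| := by
        apply Finset.sum_le_sum
        intro i _
        calc |(M *ᵥ v) i| = |∑ j, M i j * v j| := rfl
        _ ≤ ∑ j, |M i j * v j| := Finset.abs_sum_le_sum_abs _ _
        _ = ∑ j, M i j * |v j| := by
            apply Finset.sum_congr rfl
            intro j _
            rw [abs_mul, abs_of_nonneg (hnn i j)]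
  _ = ∑ j, (∑ i, M i j) * |v j| := by
        rw [Finset.sum_comm]
        apply Finset.sum_congr rfl
        intro j _
        rw [Finset.sum_mul]
  _ ≤ ∑ j, |v j| := by
        apply Finset.sum_le_sum
        intro j _
        calc (∑ i, M i j) * |v j| ≤ 1 * |v j| :=
              mul_le_mul_of_nonneg_right (hcol j) (abs_nonneg _)
        _ = |v j| := one_mul _

lemma sum_obs_split {S O : ℕ} (Ob : Matrix (Fin O) (Fin S) ℝ)
    (hnn : ∀ o s, 0 ≤ Ob o s) (hcs : ∀ s, ∑ o, Ob o s = 1) (w : Fin S → ℝ) :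
    ∑ o, l1norm (fun s => Ob o s * w s) = l1norm w := by
  unfold l1norm
  rw [Finset.sum_comm]
  apply Finset.sum_congr rfl
  intro s _
  calc ∑ o, |Ob o s * w s| = ∑ o, Ob o s * |w s| := by
        apply Finset.sum_congr rfl
        intro o _
        rw [abs_mul, abs_of_nonneg (hnn o s)]
  _ = (∑ o, Ob o s) * |w s| := by rw [Finset.sum_mul]
  _ = |w s| := by rw [hcs s, one_mul]

/-! ### Trajectory combinatorics -/

lemma snoc_lt {h : ℕ} {β : Type*} (τ : Fin h → β) (p : β) (x : Fin (h+1)) (hx : x.val < h) :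
    Fin.snoc (α := fun _ => β) τ p x = τ ⟨x.val, hx⟩ := by
  simp only [Fin.snoc, hx, dif_pos]
  rfl

lemma isAdm_init {A O h : ℕ} {π : Policy A O} {τ : Traj A O (h+1)} (hτ : IsAdm π τ) :
    IsAdm π (fun i : Fin h => τ i.castSucc) := by
  intro j
  exact hτ j.castSucc

lemma isAdm_last {A O h : ℕ} {π : Policy A O} {τ : Traj A O (h+1)} (hτ : IsAdm π τ) :
    (τ (Fin.last h)).1 = π h (fun i : Fin h => τ i.castSucc) (τ (Fin.last h)).2 := by
  exact hτ (Fin.last h)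

lemma isAdm_snoc {A O h : ℕ} {π : Policy A O} {τ : Traj A O h} (hτ : IsAdm π τ) (o : Fin O) :
    IsAdm π (Fin.snoc τ (π h τ o, o) : Traj A O (h+1)) := by
  intro j
  rcases Nat.lt_or_ge j.val h with hj | hj
  · have h1 : (Fin.snoc τ (π h τ o, o) : Traj A O (h+1)) j = τ ⟨j.val, hj⟩ :=
      snoc_lt _ _ j hj
    have h2 : (fun i : Fin j.val =>
        (Fin.snoc τ (π h τ o, o) : Traj A O (h+1)) (Fin.castLE j.isLt.le i))
        = (fun i : Fin j.val => τ (Fin.castLE hj.le i)) := by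
      funext i
      exact snoc_lt _ _ _ (lt_of_lt_of_le i.isLt hj.le)
    rw [h1, h2]
    exact hτ ⟨j.val, hj⟩
  · have hjl : j = Fin.last h := by
      ext
      exact le_antisymm (Nat.lt_succ_iff.mp j.isLt) hj
    subst hjl
    have h1 : (Fin.snoc τ (π h τ o, o) : Traj A O (h+1)) (Fin.last h) = (π h τ o, o) :=
      Fin.snoc_last _ _
    have h2 : (fun i : Fin (Fin.last h).val =>
        (Fin.snoc τ (π h τ o, o) : Traj A O (h+1)) (Fin.castLE (Fin.last h).isLt.le i))
        = fun i : Fin h => τ i := by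
      funext i
      exact snoc_lt _ _ _ (show (Fin.castLE (Fin.last h).isLt.le i).val < h from i.isLt)
    rw [h1]
    show π h τ o = π (Fin.last h).val _ (π h τ o, o).2
    rw [h2]
    rfl

lemma snoc_init_adm {A O h : ℕ} {π : Policy A O} {τ : Traj A O (h+1)} (hτ : IsAdm π τ) :
    (Fin.snoc (fun i : Fin h => τ i.castSucc)
      (π h (fun i : Fin h => τ i.castSucc) (τ (Fin.last h)).2, (τ (Fin.last h)).2)
        : Traj A O (h+1)) = τ := by
  have h1 : (π h (fun i : Fin h => τ i.castSucc) (τ (Fin.last h)).2, (τ (Fin.last h)).2)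
      = τ (Fin.last h) := by
    rw [← isAdm_last hτ]
  rw [h1]
  exact Fin.snoc_init_self τ

lemma sum_GammaF_succ {A O h : ℕ} (π : Policy A O) (f : Traj A O (h+1) → ℝ) :
    ∑ τ ∈ GammaF π (h+1), f τ
      = ∑ τ ∈ GammaF π h, ∑ o : Fin O, f (Fin.snoc τ (π h τ o, o)) := by
  have hps : ∑ τ ∈ GammaF π h, ∑ o : Fin O, f (Fin.snoc τ (π h τ o, o))
      = ∑ p ∈ (GammaF π h) ×ˢ (Finset.univ : Finset (Fin O)),
          f (Fin.snoc p.1 (π h p.1 p.2, p.2)) := by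
    rw [Finset.sum_product]
  rw [hps]
  apply Finset.sum_bij' (i := fun τ _ => ((fun i : Fin h => τ i.castSucc), (τ (Fin.last h)).2))
    (j := fun p _ => (Fin.snoc p.1 (π h p.1 p.2, p.2) : Traj A O (h+1)))
  · intro τ hτ
    simp only [GammaF, Finset.mem_filter, Finset.mem_univ, true_and] at hτ
    simp only [Finset.mem_product, GammaF, Finset.mem_filter, Finset.mem_univ, true_and]
    exact ⟨isAdm_init hτ, trivial⟩
  · intro p hp
    simp only [Finset.mem_product, GammaF, Finset.mem_filter, Finset.mem_univ, true_and] at hp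
    simp only [GammaF, Finset.mem_filter, Finset.mem_univ, true_and]
    exact isAdm_snoc hp.1 p.2
  · intro τ hτ
    simp only [GammaF, Finset.mem_filter, Finset.mem_univ, true_and] at hτ
    exact snoc_init_adm hτ
  · intro p hp
    refine Prod.ext ?_ ?_
    · funext i
      simp
    · simp
  · intro τ hτ
    simp only [GammaF, Finset.mem_filter, Finset.mem_univ, true_and] at hτ
    rw [snoc_init_adm hτ]

lemma sum_GammaF_zero {A O : ℕ} (π : Policy A O) (f : Traj A O 0 → ℝ) :
    ∑ τ ∈ GammaF π 0, f τ = f Fin.elim0 := by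
  have h1 : GammaF π 0 = Finset.univ := by
    rw [GammaF]
    apply Finset.filter_true_of_mem
    intro τ _ j
    exact j.elim0
  rw [h1]
  rw [Finset.univ_unique, Finset.sum_singleton]
  exact congrArg f (Subsingleton.elim _ _)

lemma belief_snoc {S A O : ℕ} (θ : POMDPParams S A O) {h : ℕ} (τ : Traj A O h)
    (p : Fin A × Fin O) :
    θ.belief (h+1) (Fin.snoc τ p) = (θ.Bop (h+1) p.1 p.2) *ᵥ (θ.belief h τ) := by
  have h2 : (fun i : Fin h => (Fin.snoc τ p : Traj A O (h+1)) i.castSucc) = τ := by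
    funext i
    simp
  show (θ.Bop (h+1) ((Fin.snoc τ p : Traj A O (h+1)) (Fin.last h)).1
      ((Fin.snoc τ p : Traj A O (h+1)) (Fin.last h)).2) *ᵥ
    (θ.belief h (fun i : Fin h => (Fin.snoc τ p : Traj A O (h+1)) i.castSucc)) = _
  rw [h2, Fin.snoc_last]

/-! ### Main development -/

section Main

variable {S A O : ℕ}

/-- The `j`-th operator-error term appearing in the statement. -/
noncomputable def Gterm (θ θh : POMDPParams S A O) (π : Policy A O) (j : ℕ) : ℝ :=
  ∑ τ ∈ GammaF π (j + 1),
    l1norm ((θh.Bop (j + 1) (τ (Fin.last j)).1 (τ (Fin.last j)).2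
        - θ.Bop (j + 1) (τ (Fin.last j)).1 (τ (Fin.last j)).2).mulVec
      (θ.belief j (fun i : Fin j => τ i.castSucc)))

/-- The reduced (state-space) accumulated error. -/
noncomputable def Dterm (θ θh : POMDPParams S A O) (π : Policy A O) (h : ℕ) : ℝ :=
  ∑ τ ∈ GammaF π h,
    l1norm ((pinvFC (θh.Ob (h + 1))) *ᵥ (θ.belief h τ - θh.belief h τ))

lemma Gterm_nonneg (θ θh : POMDPParams S A O) (π : Policy A O) (j : ℕ) :
    0 ≤ Gterm θ θh π j :=
  Finset.sum_nonneg fun _ _ => l1norm_nonneg _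

lemma Gterm_eq (θ θh : POMDPParams S A O) (π : Policy A O) (j : ℕ) :
    Gterm θ θh π j = ∑ τ ∈ GammaF π j, ∑ o,
      l1norm ((θh.Bop (j + 1) (π j τ o) o - θ.Bop (j + 1) (π j τ o) o) *ᵥ θ.belief j τ) := by
  unfold Gterm
  rw [sum_GammaF_succ]
  apply Finset.sum_congr rfl
  intro τ _
  apply Finset.sum_congr rfl
  intro o _
  have h2 : (fun i : Fin j => (Fin.snoc τ (π j τ o, o) : Traj A O (j+1)) i.castSucc) = τ := by
    funext i
    simp
  have h1 : (Fin.snoc τ (π j τ o, o) : Traj A O (j+1)) (Fin.last j) = (π j τ o, o) :=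
    Fin.snoc_last _ _
  rw [h1, h2]

lemma sum_o_contract (θh : POMDPParams S A O) (k : ℕ) (af : Fin O → Fin A) (w : Fin S → ℝ) :
    ∑ o, l1norm ((θh.T k (af o) * Matrix.diagonal (fun s => θh.Ob k o s)) *ᵥ w)
      ≤ l1norm w := by
  have e1 : ∀ o : Fin O, (θh.T k (af o) * Matrix.diagonal (fun s => θh.Ob k o s)) *ᵥ w
      = (θh.T k (af o)) *ᵥ (fun s => θh.Ob k o s * w s) := by
    intro o
    have hd : (Matrix.diagonal (fun s => θh.Ob k o s)) *ᵥ w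
        = fun s => θh.Ob k o s * w s := by
      funext s
      exact Matrix.mulVec_diagonal _ _ _
    rw [← Matrix.mulVec_mulVec, hd]
  calc ∑ o, l1norm ((θh.T k (af o) * Matrix.diagonal (fun s => θh.Ob k o s)) *ᵥ w)
      = ∑ o, l1norm ((θh.T k (af o)) *ᵥ (fun s => θh.Ob k o s * w s)) := by
        apply Finset.sum_congr rfl
        intro o _
        rw [e1 o]
  _ ≤ ∑ o, l1norm (fun s => θh.Ob k o s * w s) := by
        apply Finset.sum_le_sum
        intro o _
        exact l1norm_mulVec_stoch (θh.T_nonneg k (af o))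
          (fun s => (θh.T_colsum k (af o) s).le) _
  _ = l1norm w := sum_obs_split (θh.Ob k) (θh.Ob_nonneg k) (θh.Ob_colsum k) w

variable {α : ℝ}

lemma pinv_Bop (hα : 0 < α) (θh : POMDPParams S A O)
    (hσ : ∀ j : ℕ, α ≤ sigmaMin (θh.Ob j)) (h : ℕ) (a : Fin A) (o : Fin O) :
    pinvFC (θh.Ob (h + 1 + 1)) * θh.Bop (h + 1) a o
      = θh.T (h + 1) a * Matrix.diagonal (fun s => θh.Ob (h + 1) o s)
          * pinvFC (θh.Ob (h + 1)) := by
  have hid : pinvFC (θh.Ob (h + 1 + 1)) * θh.Ob (h + 1 + 1) = 1 :=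
    pinvFC_mul_self hα (le_l2norm_mulVec (hσ (h + 1 + 1)))
  unfold POMDPParams.Bop
  simp only [← Matrix.mul_assoc]
  rw [hid, Matrix.one_mul]

lemma mulVec_split (Bθ Bh : Matrix (Fin O) (Fin O) ℝ) (u v : Fin O → ℝ) :
    Bθ *ᵥ u - Bh *ᵥ v = Bh *ᵥ (u - v) - (Bh - Bθ) *ᵥ u := by
  rw [Matrix.mulVec_sub, Matrix.sub_mulVec]
  abel

lemma D_succ_le (hα : 0 < α) (θ θh : POMDPParams S A O)
    (hσ : ∀ j : ℕ, α ≤ sigmaMin (θh.Ob j)) (π : Policy A O) (h : ℕ) :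
    Dterm θ θh π (h + 1) ≤ Dterm θ θh π h + (Real.sqrt S / α) * Gterm θ θh π h := by
  have hfull : ∀ j : ℕ, ∀ x, α * l2norm x ≤ l2norm ((θh.Ob j) *ᵥ x) :=
    fun j => le_l2norm_mulVec (hσ j)
  unfold Dterm
  rw [sum_GammaF_succ, Gterm_eq, Finset.mul_sum, ← Finset.sum_add_distrib]
  apply Finset.sum_le_sum
  intro τ _
  set bθ := θ.belief h τ with hbθ
  set bh := θh.belief h τ with hbh
  have key : ∀ o : Fin O,
      l1norm ((pinvFC (θh.Ob (h + 1 + 1))) *ᵥ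
          (θ.belief (h+1) (Fin.snoc τ (π h τ o, o)) - θh.belief (h+1) (Fin.snoc τ (π h τ o, o))))
        ≤ l1norm ((θh.T (h+1) (π h τ o) * Matrix.diagonal (fun s => θh.Ob (h+1) o s)) *ᵥ
            ((pinvFC (θh.Ob (h+1))) *ᵥ (bθ - bh)))
          + (Real.sqrt S / α) *
            l1norm ((θh.Bop (h+1) (π h τ o) o - θ.Bop (h+1) (π h τ o) o) *ᵥ bθ) := by
    intro o
    set a := π h τ o with ha
    have e0 : θ.belief (h+1) (Fin.snoc τ (a, o)) - θh.belief (h+1) (Fin.snoc τ (a, o))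
        = (θh.Bop (h+1) a o) *ᵥ (bθ - bh) - (θh.Bop (h+1) a o - θ.Bop (h+1) a o) *ᵥ bθ := by
      rw [belief_snoc θ τ (a, o), belief_snoc θh τ (a, o)]
      exact mulVec_split _ _ _ _
    rw [e0, Matrix.mulVec_sub]
    refine (l1norm_sub_le _ _).trans ?_
    apply add_le_add
    · have e1 : (pinvFC (θh.Ob (h + 1 + 1))) *ᵥ ((θh.Bop (h+1) a o) *ᵥ (bθ - bh))
          = (θh.T (h+1) a * Matrix.diagonal (fun s => θh.Ob (h+1) o s)) *ᵥ
              ((pinvFC (θh.Ob (h+1))) *ᵥ (bθ - bh)) := by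
        rw [Matrix.mulVec_mulVec, pinv_Bop hα θh hσ h a o, ← Matrix.mulVec_mulVec]
      rw [e1]
    · exact l1norm_pinv_mulVec_le hα (hfull (h + 1 + 1)) _
  calc ∑ o, l1norm ((pinvFC (θh.Ob (h + 1 + 1))) *ᵥ
          (θ.belief (h+1) (Fin.snoc τ (π h τ o, o)) - θh.belief (h+1) (Fin.snoc τ (π h τ o, o))))
      ≤ ∑ o, (l1norm ((θh.T (h+1) (π h τ o) * Matrix.diagonal (fun s => θh.Ob (h+1) o s)) *ᵥ
            ((pinvFC (θh.Ob (h+1))) *ᵥ (bθ - bh)))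
          + (Real.sqrt S / α) *
            l1norm ((θh.Bop (h+1) (π h τ o) o - θ.Bop (h+1) (π h τ o) o) *ᵥ bθ)) :=
        Finset.sum_le_sum fun o _ => key o
  _ = (∑ o, l1norm ((θh.T (h+1) (π h τ o) * Matrix.diagonal (fun s => θh.Ob (h+1) o s)) *ᵥ
            ((pinvFC (θh.Ob (h+1))) *ᵥ (bθ - bh))))
        + (Real.sqrt S / α) * ∑ o,
            l1norm ((θh.Bop (h+1) (π h τ o) o - θ.Bop (h+1) (π h τ o) o) *ᵥ bθ) := by
        rw [Finset.sum_add_distrib, Finset.mul_sum]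
  _ ≤ l1norm ((pinvFC (θh.Ob (h+1))) *ᵥ (bθ - bh))
        + (Real.sqrt S / α) * ∑ o,
            l1norm ((θh.Bop (h+1) (π h τ o) o - θ.Bop (h+1) (π h τ o) o) *ᵥ bθ) := by
        apply add_le_add_left
        exact sum_o_contract θh (h+1) (fun o => π h τ o) _

lemma D_le (hα : 0 < α) (θ θh : POMDPParams S A O)
    (hσ : ∀ j : ℕ, α ≤ sigmaMin (θh.Ob j)) (π : Policy A O) :
    ∀ h : ℕ, Dterm θ θh π h
      ≤ (Real.sqrt S / α) * (∑ j ∈ Finset.range h, Gterm θ θh π j)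
        + (Real.sqrt S / α) * l1norm (θ.bvec0 - θh.bvec0) := by
  intro h
  induction h with
  | zero =>
      have hD0 : Dterm θ θh π 0
          = l1norm ((pinvFC (θh.Ob 1)) *ᵥ (θ.bvec0 - θh.bvec0)) := by
        unfold Dterm
        rw [sum_GammaF_zero]
        rfl
      rw [hD0]
      simp only [Finset.range_zero, Finset.sum_empty, mul_zero, zero_add]
      exact l1norm_pinv_mulVec_le hα (le_l2norm_mulVec (hσ 1)) _
  | succ h ih =>
      have hstep := D_succ_le hα θ θh hσ π h
      rw [Finset.sum_range_succ, mul_add]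
      linarith

lemma S_pos (hα : 0 < α) (θh : POMDPParams S A O)
    (hσ : α ≤ sigmaMin (θh.Ob 1)) : 0 < S := by
  by_contra hS
  push_neg at hS
  have hS0 : S = 0 := Nat.le_zero.mp hS
  subst hS0
  have hempty : {r : ℝ | ∃ x : Fin 0 → ℝ, l2norm x = 1 ∧ r = l2norm ((θh.Ob 1).mulVec x)} = ∅ := by
    ext r
    simp only [Set.mem_setOf_eq, Set.mem_empty_iff_false, iff_false, not_exists]
    intro x
    rintro ⟨hx, -⟩
    · exact absurd hx (by simp [l2norm])
  have : sigmaMin (θh.Ob 1) = 0 := by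
    rw [sigmaMin, hempty, Real.sInf_empty]
  rw [this] at hσ
  linarith

lemma alpha_le_one (hα : 0 < α) (θh : POMDPParams S A O)
    (hσ : α ≤ sigmaMin (θh.Ob 1)) (hS : 0 < S) : α ≤ 1 := by
  have s0 : Fin S := ⟨0, hS⟩
  let e : Fin S → ℝ := fun i => if i = s0 then 1 else 0
  have hunit : l2norm e = 1 := by
    unfold l2norm
    have h : ∑ i, (e i) ^ 2 = 1 := by
      rw [Finset.sum_eq_single s0]
      · simp [e]
      · intro i _ hi
        simp [e, hi]
      · intro hi
        exact absurd (Finset.mem_univ s0) hi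
    rw [h, Real.sqrt_one]
  have h1 : α ≤ l2norm ((θh.Ob 1) *ᵥ e) := hσ.trans (sigmaMin_le _ hunit)
  have hcol : ((θh.Ob 1) *ᵥ e) = fun o => θh.Ob 1 o s0 := by
    funext o
    simp only [Matrix.mulVec, dotProduct]
    rw [Finset.sum_eq_single s0]
    · simp [e]
    · intro i _ hi
      simp [e, hi]
    · intro hi
      exact absurd (Finset.mem_univ s0) hi
  have h3 : l1norm (fun o => θh.Ob 1 o s0) = 1 := by
    unfold l1norm
    rw [← θh.Ob_colsum 1 s0]
    apply Finset.sum_congr rfl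
    intro o _
    exact abs_of_nonneg (θh.Ob_nonneg 1 o s0)
  calc α ≤ l2norm ((θh.Ob 1) *ᵥ e) := h1
  _ = l2norm (fun o => θh.Ob 1 o s0) := by rw [hcol]
  _ ≤ l1norm (fun o => θh.Ob 1 o s0) := l2norm_le_l1norm _
  _ = 1 := h3

lemma one_le_c (hα : 0 < α) (θh : POMDPParams S A O)
    (hσ : α ≤ sigmaMin (θh.Ob 1)) : 1 ≤ Real.sqrt S / α := by
  have hS := S_pos hα θh hσ
  have h1 : α ≤ 1 := alpha_le_one hα θh hσ hS
  have h2 : (1 : ℝ) ≤ Real.sqrt S := by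
    have : (1 : ℝ) ≤ (S : ℝ) := by exact_mod_cast hS
    calc (1 : ℝ) = Real.sqrt 1 := Real.sqrt_one.symm
    _ ≤ Real.sqrt S := Real.sqrt_le_sqrt this
  rw [le_div_iff₀ hα, one_mul]
  linarith

lemma final_le (hα : 0 < α) (θ θh : POMDPParams S A O)
    (hσ : ∀ j : ℕ, α ≤ sigmaMin (θh.Ob j)) (π : Policy A O) (h : ℕ) :
    ∑ τ ∈ GammaF π (h + 1), l1norm (θ.belief (h+1) τ - θh.belief (h+1) τ)
      ≤ Dterm θ θh π h + Gterm θ θh π h := by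
  rw [sum_GammaF_succ, Gterm_eq]
  unfold Dterm
  rw [← Finset.sum_add_distrib]
  apply Finset.sum_le_sum
  intro τ _
  set bθ := θ.belief h τ with hbθ
  set bh := θh.belief h τ with hbh
  have key : ∀ o : Fin O,
      l1norm (θ.belief (h+1) (Fin.snoc τ (π h τ o, o)) - θh.belief (h+1) (Fin.snoc τ (π h τ o, o)))
        ≤ l1norm ((θh.T (h+1) (π h τ o) * Matrix.diagonal (fun s => θh.Ob (h+1) o s)) *ᵥ
            ((pinvFC (θh.Ob (h+1))) *ᵥ (bθ - bh)))
          + l1norm ((θh.Bop (h+1) (π h τ o) o - θ.Bop (h+1) (π h τ o) o) *ᵥ bθ) := by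
    intro o
    set a := π h τ o with ha
    have e0 : θ.belief (h+1) (Fin.snoc τ (a, o)) - θh.belief (h+1) (Fin.snoc τ (a, o))
        = (θh.Bop (h+1) a o) *ᵥ (bθ - bh) - (θh.Bop (h+1) a o - θ.Bop (h+1) a o) *ᵥ bθ := by
      rw [belief_snoc θ τ (a, o), belief_snoc θh τ (a, o)]
      exact mulVec_split _ _ _ _
    rw [e0]
    refine (l1norm_sub_le _ _).trans ?_
    apply add_le_add_left
    have e1 : (θh.Bop (h+1) a o) *ᵥ (bθ - bh)
        = (θh.Ob (h + 1 + 1)) *ᵥ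
            ((θh.T (h+1) a * Matrix.diagonal (fun s => θh.Ob (h+1) o s)) *ᵥ
              ((pinvFC (θh.Ob (h+1))) *ᵥ (bθ - bh))) := by
      unfold POMDPParams.Bop
      simp only [Matrix.mulVec_mulVec, ← Matrix.mul_assoc]
    rw [e1]
    exact l1norm_mulVec_stoch (θh.Ob_nonneg (h + 1 + 1))
      (fun s => (θh.Ob_colsum (h + 1 + 1) s).le) _
  calc ∑ o, l1norm (θ.belief (h+1) (Fin.snoc τ (π h τ o, o))
          - θh.belief (h+1) (Fin.snoc τ (π h τ o, o)))
      ≤ ∑ o, (l1norm ((θh.T (h+1) (π h τ o) * Matrix.diagonal (fun s => θh.Ob (h+1) o s)) *ᵥ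
            ((pinvFC (θh.Ob (h+1))) *ᵥ (bθ - bh)))
          + l1norm ((θh.Bop (h+1) (π h τ o) o - θ.Bop (h+1) (π h τ o) o) *ᵥ bθ)) :=
        Finset.sum_le_sum fun o _ => key o
  _ = (∑ o, l1norm ((θh.T (h+1) (π h τ o) * Matrix.diagonal (fun s => θh.Ob (h+1) o s)) *ᵥ
            ((pinvFC (θh.Ob (h+1))) *ᵥ (bθ - bh))))
        + ∑ o, l1norm ((θh.Bop (h+1) (π h τ o) o - θ.Bop (h+1) (π h τ o) o) *ᵥ bθ) := by
        rw [Finset.sum_add_distrib]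
  _ ≤ l1norm ((pinvFC (θh.Ob (h+1))) *ᵥ (bθ - bh))
        + ∑ o, l1norm ((θh.Bop (h+1) (π h τ o) o - θ.Bop (h+1) (π h τ o) o) *ᵥ bθ) := by
        apply add_le_add_left
        exact sum_o_contract θh (h+1) (fun o => π h τ o) _

end Main

end
/-- Lemma: bounding belief errors by operator errors. -/
theorem belief_error_le_operator_error {S A O : ℕ} (hSO : S ≤ O)
    (α : ℝ) (hα : 0 < α) (θ θh : POMDPParams S A O)
    (hσ : ∀ j : ℕ, α ≤ sigmaMin (θh.Ob j))
    (π : Policy A O) (h : ℕ) (hh : 1 ≤ h) :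
    ∑ τ ∈ GammaF π h, l1norm (θ.belief h τ - θh.belief h τ)
      ≤ (Real.sqrt S / α) *
          ∑ j ∈ Finset.range h, ∑ τ ∈ GammaF π (j + 1),
            l1norm ((θh.Bop (j + 1) (τ (Fin.last j)).1 (τ (Fin.last j)).2
                - θ.Bop (j + 1) (τ (Fin.last j)).1 (τ (Fin.last j)).2).mulVec
              (θ.belief j (fun i : Fin j => τ i.castSucc)))
        + (Real.sqrt S / α) * l1norm (θ.bvec0 - θh.bvec0) := by
  obtain ⟨k, rfl⟩ : ∃ k, h = k + 1 := ⟨h - 1, by omega⟩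
  have hG : ∑ j ∈ Finset.range (k + 1), ∑ τ ∈ GammaF π (j + 1),
        l1norm ((θh.Bop (j + 1) (τ (Fin.last j)).1 (τ (Fin.last j)).2
            - θ.Bop (j + 1) (τ (Fin.last j)).1 (τ (Fin.last j)).2).mulVec
          (θ.belief j (fun i : Fin j => τ i.castSucc)))
      = ∑ j ∈ Finset.range (k + 1), Gterm θ θh π j := rfl
  rw [hG]
  have hc1 : 1 ≤ Real.sqrt S / α := one_le_c hα θh (hσ 1)
  have h1 := final_le hα θ θh hσ π k
  have h2 := D_le hα θ θh hσ π k
  have h3 : Gterm θ θh π k ≤ (Real.sqrt S / α) * Gterm θ θh π k :=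
    le_mul_of_one_le_left (Gterm_nonneg _ _ _ _) hc1
  calc ∑ τ ∈ GammaF π (k + 1), l1norm (θ.belief (k + 1) τ - θh.belief (k + 1) τ)
      ≤ Dterm θ θh π k + Gterm θ θh π k := h1
  _ ≤ ((Real.sqrt S / α) * (∑ j ∈ Finset.range k, Gterm θ θh π j)
        + (Real.sqrt S / α) * l1norm (θ.bvec0 - θh.bvec0))
      + (Real.sqrt S / α) * Gterm θ θh π k := by
        apply add_le_add h2 h3
  _ = (Real.sqrt S / α) * (∑ j ∈ Finset.range (k + 1), Gterm θ θh π j)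
        + (Real.sqrt S / α) * l1norm (θ.bvec0 - θh.bvec0) := by
      rw [Finset.sum_range_succ]
      ring
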